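/- Let k ≥ 3 and m ≥ (432k)² be integers with m − k + 3 divisible by 3. Then ρ(F^{k−3}_{(m−k+3)/3}) is the largest root of x³ − x² + (1 − (2/3)m − (1/3)k)x + k − 3 = 0, and moreover ρ(F^{k−3}_{(m−k+3)/3}) < √(m − k). -/

import Mathlib

open SimpleGraph

/-- The `l`-edge-connectivity of a graph: the minimum number of edges whose removal
leaves a graph with at least `l` connected components, if the graph has at least `l`
vertices; otherwise the number of vertices. -/
noncomputable def edgeConnL {V : Type*} (l : ℕ) (G : SimpleGraph V) : ℕ :=
  if l ≤ Nat.card V then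
    sInf {c : ℕ | ∃ F : Set (Sym2 V), F ⊆ G.edgeSet ∧ F.ncard = c ∧
      l ≤ Nat.card (G.deleteEdges F).ConnectedComponent}
  else Nat.card V

/-- A graph is minimally `(k,l)`-edge-connected if it is connected, its
`l`-edge-connectivity is at least `k`, and deleting any edge drops the
`l`-edge-connectivity below `k`. -/
def IsMinimallyKLEdgeConnected {V : Type*} (k l : ℕ) (G : SimpleGraph V) : Prop :=
  G.Connected ∧ k ≤ edgeConnL l G ∧
    ∀ e ∈ G.edgeSet, edgeConnL l (G.deleteEdges {e}) < k

/-- The real adjacency matrix of a simple graph. -/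
noncomputable def adjMat {V : Type*} (G : SimpleGraph V) : Matrix V V ℝ :=
  letI := Classical.decRel G.Adj
  G.adjMatrix ℝ

/-- The spectral radius of a graph: the largest (real) eigenvalue of its adjacency matrix. -/
noncomputable def specRad {V : Type*} [Fintype V] [DecidableEq V]
    (G : SimpleGraph V) : ℝ :=
  sSup (spectrum ℝ (adjMat G))

abbrev FriendPendV (t p : ℕ) : Type := Unit ⊕ ((Fin t × Fin 2) ⊕ Fin p)

/-- `F^{p}_{t}`: the graph obtained from the disjoint union of the star `K_{1,p}` and the
friendship graph consisting of `t` triangles sharing one common apex, by identifying the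
centre of the star with the apex.  Here `Sum.inl _` is the apex, `(i, _) : Fin t × Fin 2`
are the two outer vertices of the `i`-th triangle, and `Fin p` are the pendant vertices. -/
def FriendPend (t p : ℕ) : SimpleGraph (FriendPendV t p) :=
  SimpleGraph.fromRel (fun a b =>
    match a, b with
    | Sum.inl _, Sum.inr _ => True
    | Sum.inr (Sum.inl (i, _)), Sum.inr (Sum.inl (j, _)) => i = j
    | _, _ => False)

/-!
An eigenvector of `F^p_t` for an eigenvalue `μ ∉ {0, 1, -1}` is constant on the outer triangle
vertices (value `v₀/(μ-1)`) and on the pendant vertices (value `v₀/μ`), where `v₀` is its apex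
entry; the apex equation then reads `v₀ · (μ³ - μ² - (2t+p)μ + p) = 0`, and `v₀ ≠ 0`.
Conversely every root `r ∉ {0, 1}` of this cubic has the eigenvector `(r(r-1), r, r-1)`.
So the spectral radius is the largest root, which exceeds `1`.  With `A = 2t + p`, that root lies
below any `s ≥ 1` with `A < s² - s`, because there `x(x² - x - A) + p > 0`; for
`s = √(m - k)` this is the inequality `√(m - k) < (m - 4k + 3)/3`.
-/

open Matrix

lemma Matrix.mem_spectrum_iff_exists_mulVec_eq_smul {n K : Type*} [Fintype n] [DecidableEq n]
    [Field K] {A : Matrix n n K} {μ : K} :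
    μ ∈ spectrum K A ↔ ∃ v ≠ 0, A *ᵥ v = μ • v := by
  rw [← Matrix.spectrum_toLin', ← Module.End.hasEigenvalue_iff_mem_spectrum]
  constructor
  · intro h
    obtain ⟨v, hv⟩ := h.exists_hasEigenvector
    exact ⟨v, hv.2, Module.End.mem_eigenspace_iff.mp hv.1⟩
  · rintro ⟨v, hv0, hv⟩
    exact Module.End.hasEigenvalue_of_hasEigenvector (μ := μ) (x := v)
      ⟨Module.End.mem_eigenspace_iff.mpr hv, hv0⟩

lemma adjMat_mulVec_apply {V : Type*} [Fintype V] (G : SimpleGraph V) [DecidableRel G.Adj]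
    (v : V → ℝ) (u : V) : (adjMat G *ᵥ v) u = ∑ w, if G.Adj u w then v w else 0 := by
  simp only [adjMat, mulVec, dotProduct, adjMatrix_apply, ite_mul, one_mul, zero_mul]

section Cubic

variable {A P : ℝ}

lemma cubic_root_lt {s x : ℝ} (hP : 0 ≤ P) (hs : 1 ≤ s) (hA : A < s ^ 2 - s)
    (hx : x ^ 3 - x ^ 2 - A * x + P = 0) : x < s := by
  by_contra! hsx
  have hgap : A < x ^ 2 - x := by nlinarith
  nlinarith

lemma exists_cubic_root_gt_one (hP : 0 ≤ P) (hPA : P < A) :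
    ∃ x, 1 < x ∧ x ^ 3 - x ^ 2 - A * x + P = 0 := by
  have hcont : Continuous fun x : ℝ => x ^ 3 - x ^ 2 - A * x + P := by fun_prop
  obtain ⟨x, hx, hx0⟩ := intermediate_value_Icc (show (1 : ℝ) ≤ A + 2 by linarith)
    hcont.continuousOn (show (0 : ℝ) ∈ Set.Icc _ _ by constructor <;> nlinarith)
  refine ⟨x, lt_of_le_of_ne hx.1 ?_, hx0⟩
  rintro rfl
  simp only at hx0
  linarith

lemma exists_isGreatest_cubic_roots (hP : 0 ≤ P) (hPA : P < A) :
    ∃ r, 1 < r ∧ IsGreatest {x : ℝ | x ^ 3 - x ^ 2 - A * x + P = 0} r := by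
  set S := {x : ℝ | x ^ 3 - x ^ 2 - A * x + P = 0}
  have hclosed : IsClosed S := isClosed_eq (by fun_prop) continuous_const
  obtain ⟨x, hx1, hx⟩ := exists_cubic_root_gt_one hP hPA
  have hbdd : BddAbove S :=
    ⟨A + 2, fun y hy => (cubic_root_lt hP (by linarith) (by nlinarith) hy).le⟩
  exact ⟨sSup S, hx1.trans_le (le_csSup hbdd hx),
    hclosed.csSup_mem ⟨x, hx⟩ hbdd, fun y hy => le_csSup hbdd hy⟩

end Cubic

namespace FriendPend

variable {t p : ℕ}

lemma adj_triangle_iff (i : Fin t) (s : Fin 2) (x : Fin t × Fin 2) :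
    (FriendPend t p).Adj (.inr (.inl (i, s))) (.inr (.inl x)) ↔ x = (i, 1 - s) := by
  obtain ⟨j, s'⟩ := x
  have hne : ∀ a b : Fin 2, a ≠ b ↔ b = 1 - a := by decide
  simp only [FriendPend, fromRel_adj, ne_eq, Sum.inr.injEq, Sum.inl.injEq, Prod.mk.injEq,
    ← hne]
  grind

lemma mulVec_apex (v : FriendPendV t p → ℝ) :
    (adjMat (FriendPend t p) *ᵥ v) (.inl ()) =
      (∑ x : Fin t × Fin 2, v (.inr (.inl x))) + ∑ j : Fin p, v (.inr (.inr j)) := by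
  classical
  simp [adjMat_mulVec_apply, Fintype.sum_sum_type, FriendPend]

lemma mulVec_pendant (v : FriendPendV t p → ℝ) (j : Fin p) :
    (adjMat (FriendPend t p) *ᵥ v) (.inr (.inr j)) = v (.inl ()) := by
  classical
  simp [adjMat_mulVec_apply, Fintype.sum_sum_type, FriendPend]

lemma mulVec_triangle (v : FriendPendV t p → ℝ) (i : Fin t) (s : Fin 2) :
    (adjMat (FriendPend t p) *ᵥ v) (.inr (.inl (i, s))) =
      v (.inl ()) + v (.inr (.inl (i, 1 - s))) := by
  classical
  simp only [adjMat_mulVec_apply, Fintype.sum_sum_type, adj_triangle_iff, Finset.sum_ite_eq',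
    Finset.mem_univ, if_true]
  simp [FriendPend]

def rootVector (t p : ℕ) (r : ℝ) : FriendPendV t p → ℝ :=
  Sum.elim (fun _ => r * (r - 1)) (Sum.elim (fun _ => r) (fun _ => r - 1))

lemma mulVec_rootVector {r : ℝ} (hr : r ^ 3 - r ^ 2 - (2 * t + p) * r + p = 0) :
    adjMat (FriendPend t p) *ᵥ rootVector t p r = r • rootVector t p r := by
  funext u
  rcases u with ⟨⟨⟩⟩ | (⟨i, s⟩ | j)
  · simp only [mulVec_apex, rootVector, Sum.elim_inl, Sum.elim_inr, Finset.sum_const,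
      Finset.card_univ, Fintype.card_prod, Fintype.card_fin, nsmul_eq_mul, Pi.smul_apply,
      smul_eq_mul]
    push_cast
    linear_combination -hr
  · simp only [mulVec_triangle, rootVector, Sum.elim_inl, Sum.elim_inr, Pi.smul_apply,
      smul_eq_mul]
    ring
  · simp only [mulVec_pendant, rootVector, Sum.elim_inl, Sum.elim_inr, Pi.smul_apply,
      smul_eq_mul]

lemma mem_spectrum_of_cubic_root {r : ℝ} (hr : r ^ 3 - r ^ 2 - (2 * t + p) * r + p = 0)
    (hr0 : r ≠ 0) (hr1 : r ≠ 1) : r ∈ spectrum ℝ (adjMat (FriendPend t p)) := by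
  refine mem_spectrum_iff_exists_mulVec_eq_smul.mpr ⟨rootVector t p r, ?_, mulVec_rootVector hr⟩
  intro h
  have := congrFun h (.inl ())
  simp only [rootVector, Sum.elim_inl, Pi.zero_apply, mul_eq_zero, sub_eq_zero] at this
  tauto

lemma apex_mul_cubic_eq_zero {μ : ℝ} {v : FriendPendV t p → ℝ}
    (hv : adjMat (FriendPend t p) *ᵥ v = μ • v) (hμ : μ ≠ -1) :
    v (.inl ()) * (μ ^ 3 - μ ^ 2 - (2 * t + p) * μ + p) = 0 := by
  have hev : ∀ u, (adjMat (FriendPend t p) *ᵥ v) u = μ * v u := fun u => congrFun hv u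
  have hpendant (j : Fin p) : μ * v (.inr (.inr j)) = v (.inl ()) := by
    rw [← hev, mulVec_pendant]
  have htriangle (x : Fin t × Fin 2) : (μ - 1) * v (.inr (.inl x)) = v (.inl ()) := by
    obtain ⟨i, s⟩ := x
    have h1 := hev (.inr (.inl (i, s)))
    have h2 := hev (.inr (.inl (i, 1 - s)))
    rw [mulVec_triangle] at h1 h2
    rw [sub_sub_cancel] at h2
    have hsym : v (.inr (.inl (i, s))) = v (.inr (.inl (i, 1 - s))) := by
      have : (μ + 1) * (v (.inr (.inl (i, s))) - v (.inr (.inl (i, 1 - s)))) = 0 := by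
        linear_combination h2 - h1
      simpa [sub_eq_zero, add_eq_zero_iff_eq_neg, hμ] using this
    linear_combination -h1 - hsym
  have happex := hev (.inl ())
  rw [mulVec_apex] at happex
  have hsum_triangle : (μ - 1) * ∑ x : Fin t × Fin 2, v (.inr (.inl x)) = 2 * t * v (.inl ()) := by
    simp only [Finset.mul_sum, htriangle, Finset.sum_const, Finset.card_univ, Fintype.card_prod,
      Fintype.card_fin, nsmul_eq_mul]
    push_cast
    ring
  have hsum_pendant : μ * ∑ j : Fin p, v (.inr (.inr j)) = p * v (.inl ()) := by
    simp [Finset.mul_sum, hpendant]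
  linear_combination μ * hsum_triangle + (μ - 1) * hsum_pendant - μ * (μ - 1) * happex

lemma cubic_root_of_mem_spectrum {μ : ℝ} (hμ : μ ∈ spectrum ℝ (adjMat (FriendPend t p)))
    (hμ0 : μ ≠ 0) (hμ1 : μ ≠ 1) (hμ1' : μ ≠ -1) :
    μ ^ 3 - μ ^ 2 - (2 * t + p) * μ + p = 0 := by
  obtain ⟨v, hv0, hv⟩ := mem_spectrum_iff_exists_mulVec_eq_smul.mp hμ
  refine (mul_eq_zero.mp (apex_mul_cubic_eq_zero hv hμ1')).resolve_left fun happex => hv0 ?_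
  have hev : ∀ u, (adjMat (FriendPend t p) *ᵥ v) u = μ * v u := fun u => congrFun hv u
  funext u
  rcases u with ⟨⟩ | (⟨i, s⟩ | j)
  · exact happex
  · have h1 := hev (.inr (.inl (i, s)))
    have h2 := hev (.inr (.inl (i, 1 - s)))
    rw [mulVec_triangle, happex] at h1 h2
    rw [sub_sub_cancel] at h2
    have : (μ - 1) * (μ + 1) * v (.inr (.inl (i, s))) = 0 := by
      linear_combination -(μ * h1) - h2
    simpa [sub_eq_zero, add_eq_zero_iff_eq_neg, hμ1, hμ1'] using this
  · have := hev (.inr (.inr j))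
    rw [mulVec_pendant, happex] at this
    simpa [hμ0] using this.symm

theorem specRad_eq_of_isGreatest {r : ℝ} (hr1 : 1 < r)
    (hr : IsGreatest {x : ℝ | x ^ 3 - x ^ 2 - (2 * t + p) * x + p = 0} r) :
    specRad (FriendPend t p) = r := by
  refine IsGreatest.csSup_eq ⟨mem_spectrum_of_cubic_root hr.1 (by linarith) hr1.ne', ?_⟩
  intro μ hμ
  by_contra! hrμ
  exact hrμ.not_ge <| hr.2 <|
    cubic_root_of_mem_spectrum hμ (by linarith) (by linarith) (by linarith)

end FriendPend

lemma sqrt_sub_lt {k m : ℝ} (hk : 3 ≤ k) (hm : (432 * k) ^ 2 ≤ m) :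
    √(m - k) < (m - 4 * k + 3) / 3 := by
  have hkm : 559872 * k ≤ m := by nlinarith
  rw [Real.sqrt_lt' (by linarith)]
  nlinarith

/-- Let `k ≥ 3` and `m ≥ (432k)²` with `m − k + 3` divisible by 3, say
`m − k + 3 = 3t`.  Then `ρ(F^{k−3}_{(m−k+3)/3})` is the largest root of
`x³ − x² + (1 − (2/3)m − (1/3)k)x + k − 3 = 0`, and moreover
`ρ(F^{k−3}_{(m−k+3)/3}) < √(m − k)`. -/
theorem spectral_radius_FriendPend_size (k m t : ℕ) (hk : 3 ≤ k)
    (hm : (432 * k) ^ 2 ≤ m) (ht : 3 * t = m - k + 3) :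
    IsGreatest {x : ℝ | x ^ 3 - x ^ 2 +
        (1 - (2 / 3) * (m : ℝ) - (1 / 3) * (k : ℝ)) * x + (k : ℝ) - 3 = 0}
      (specRad (FriendPend t (k - 3))) ∧
    specRad (FriendPend t (k - 3)) < Real.sqrt ((m : ℝ) - (k : ℝ)) := by
  have hk' : (3 : ℝ) ≤ k := by exact_mod_cast hk
  have hm' : (432 * (k : ℝ)) ^ 2 ≤ m := by exact_mod_cast hm
  have hp : ((k - 3 : ℕ) : ℝ) = k - 3 := by push_cast [Nat.cast_sub hk]; ring
  have h3t : 3 * (t : ℝ) = m - k + 3 := by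
    rw [← Nat.cast_ofNat, ← Nat.cast_mul, ht, Nat.cast_add, Nat.cast_sub (by nlinarith)]
  have ht1 : (1 : ℝ) ≤ t := by exact_mod_cast (show 1 ≤ t by omega)
  obtain ⟨r, hr1, hr⟩ := exists_isGreatest_cubic_roots (A := 2 * t + (k - 3 : ℕ))
    (P := (k - 3 : ℕ)) (Nat.cast_nonneg _) (by linarith)
  rw [FriendPend.specRad_eq_of_isGreatest hr1 hr]
  have hroots : {x : ℝ | x ^ 3 - x ^ 2 + (1 - (2 / 3) * (m : ℝ) - (1 / 3) * (k : ℝ)) * x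
      + (k : ℝ) - 3 = 0} =
      {x : ℝ | x ^ 3 - x ^ 2 - (2 * t + (k - 3 : ℕ)) * x + (k - 3 : ℕ) = 0} := by
    ext x
    simp only [Set.mem_ofPred_eq, hp]
    constructor <;> intro h
    · linear_combination h - (2 * x / 3) * h3t
    · linear_combination h + (2 * x / 3) * h3t
  refine ⟨hroots ▸ hr, cubic_root_lt (Nat.cast_nonneg _) ?_ ?_ hr.1⟩
  · exact Real.one_le_sqrt.mpr (by nlinarith)
  · rw [Real.sq_sqrt (by linarith), hp]
    linarith [sqrt_sub_lt hk' hm']
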